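/- arXiv:2204.06168 — 12 statements merged into one kernel-verified Lean document; each statement's English description precedes it below -/
import Mathlib

section
/- Let s ∈ [0,1] be a real number, let d > 0 and let t be a real number with t ≤ 0 or t > 1. Let λ, L, A⁻, A⁺, B⁻, B⁺ be real numbers such that: if t ≤ 0 then B⁻ = (A⁻ − λ)·d/(1−t) and B⁺ = (A⁺ − λ)·d/(1−t), while if t > 1 then B⁻ = (A⁺ − λ)·d/(−t) and B⁺ = (A⁻ − λ)·d/(−t). If B⁻ < 0, B⁺ > 0, and B⁻ ≤ L ≤ B⁺, then A⁻ ≤ λ + ((s − t)/d)·L ≤ A⁺. -/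
/-! In both cases `A⁻` and `A⁺` are `λ + k·B⁻` and `λ + k·B⁺` (in some order), with
`k = (1 - t)/d` resp. `k = -t/d`, the value of `(s - t)/d` at the far end `s = 1` resp. `s = 0`
of the interval. So `(s - t)/d = θ k` with `θ ∈ [0, 1]`, and since `[B⁻, B⁺]` contains `0`,
shrinking it by `θ` keeps it inside itself: `(s - t)/d · L` lies between `k·B⁻` and `k·B⁺`. -/

lemma mul_mem_Icc_of_nonneg_of_le {c k a b x : ℝ} (hc : 0 ≤ c) (hck : c ≤ k)
    (ha : a ≤ 0) (hb : 0 ≤ b) (hax : a ≤ x) (hxb : x ≤ b) :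
    c * x ∈ Set.Icc (k * a) (k * b) :=
  ⟨(mul_le_mul_of_nonpos_right hck ha).trans (mul_le_mul_of_nonneg_left hax hc),
    (mul_le_mul_of_nonneg_left hxb hc).trans (mul_le_mul_of_nonneg_right hck hb)⟩

lemma mul_mem_Icc_of_nonpos_of_le {c k a b x : ℝ} (hc : c ≤ 0) (hkc : k ≤ c)
    (ha : a ≤ 0) (hb : 0 ≤ b) (hax : a ≤ x) (hxb : x ≤ b) :
    c * x ∈ Set.Icc (k * b) (k * a) := by
  obtain ⟨hlo, hhi⟩ :=
    mul_mem_Icc_of_nonneg_of_le (neg_nonneg.2 hc) (neg_le_neg hkc) ha hb hax hxb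
  simp only [neg_mul, neg_le_neg_iff] at hlo hhi
  exact ⟨hhi, hlo⟩

lemma add_div_mul_sub_mul_div {q d : ℝ} (hq : q ≠ 0) (hd : d ≠ 0) (lam A : ℝ) :
    lam + q / d * ((A - lam) * d / q) = A := by
  field_simp
  ring

/-- Single-step induction lemma (Lemma 3.1) of the ENO-based DBI framework,
combining both cases t ≤ 0 and t > 1. -/
theorem dbi_step (s d t lam L Aminus Aplus Bminus Bplus : ℝ)
    (hs0 : 0 ≤ s) (hs1 : s ≤ 1) (hd : 0 < d) (ht : t ≤ 0 ∨ 1 < t)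
    (hBminus_le : t ≤ 0 → Bminus = (Aminus - lam) * d / (1 - t))
    (hBplus_le : t ≤ 0 → Bplus = (Aplus - lam) * d / (1 - t))
    (hBminus_gt : 1 < t → Bminus = (Aplus - lam) * d / (-t))
    (hBplus_gt : 1 < t → Bplus = (Aminus - lam) * d / (-t))
    (hBmneg : Bminus < 0) (hBppos : 0 < Bplus)
    (hL1 : Bminus ≤ L) (hL2 : L ≤ Bplus) :
    Aminus ≤ lam + ((s - t) / d) * L ∧ lam + ((s - t) / d) * L ≤ Aplus := by
  rcases ht with ht | ht
  · have hq : 1 - t ≠ 0 := by linarith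
    have hAm : Aminus = lam + (1 - t) / d * Bminus := by
      rw [hBminus_le ht, add_div_mul_sub_mul_div hq hd.ne']
    have hAp : Aplus = lam + (1 - t) / d * Bplus := by
      rw [hBplus_le ht, add_div_mul_sub_mul_div hq hd.ne']
    have hc : 0 ≤ (s - t) / d := div_nonneg (by linarith) hd.le
    have hck : (s - t) / d ≤ (1 - t) / d := by gcongr
    obtain ⟨hlo, hhi⟩ := mul_mem_Icc_of_nonneg_of_le hc hck hBmneg.le hBppos.le hL1 hL2
    constructor <;> linarith
  · have hq : -t ≠ 0 := by linarith
    have hAm : Aminus = lam + -t / d * Bplus := by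
      rw [hBplus_gt ht, add_div_mul_sub_mul_div hq hd.ne']
    have hAp : Aplus = lam + -t / d * Bminus := by
      rw [hBminus_gt ht, add_div_mul_sub_mul_div hq hd.ne']
    have hc : (s - t) / d ≤ 0 := div_nonpos_of_nonpos_of_nonneg (by linarith) hd.le
    have hkc : -t / d ≤ (s - t) / d := by gcongr; linarith
    obtain ⟨hlo, hhi⟩ := mul_mem_Icc_of_nonpos_of_le hc hkc hBmneg.le hBppos.le hL1 hL2
    constructor <;> linarith
end

section
/- Let s ∈ [0,1] be a real number, let d > 0 and let t ≤ 0 be real numbers. Let λ, L, A⁻, A⁺ be real numbers and set B⁻ = (A⁻ − λ)·d/(1−t) and B⁺ = (A⁺ − λ)·d/(1−t). If B⁻ < 0, B⁺ > 0, and B⁻ ≤ L ≤ B⁺, then A⁻ ≤ λ + ((s − t)/d)·L ≤ A⁺. -/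
/-!
With `r = d / (1 - t) > 0` and `c = (s - t) / (1 - t) ∈ [0, 1]` one has `(s - t) / d * L = c * (L / r)`,
and the hypotheses say `L / r ∈ [A⁻ - λ, A⁺ - λ]`. This interval contains `0`, so it is closed under
scaling by `c`.
-/

open Set

lemma mul_mem_Icc_of_mem_Icc {a b x c : ℝ} (ha : a ≤ 0) (hb : 0 ≤ b) (hx : x ∈ Icc a b)
    (hc : c ∈ Icc 0 1) : c * x ∈ Icc a b :=
  ((convex_Icc a b).starConvex ⟨ha, hb⟩).smul_mem hx hc.1 hc.2

lemma sub_div_sub_mem_Icc {s t b : ℝ} (hts : t ≤ s) (hsb : s ≤ b) (htb : t < b) :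
    (s - t) / (b - t) ∈ Icc 0 1 :=
  ⟨div_nonneg (sub_nonneg.2 hts) (sub_nonneg.2 htb.le),
    (div_le_one (sub_pos.2 htb)).2 (sub_le_sub_right hsb t)⟩

/-- Case I (t ≤ 0) of the single-step induction lemma (Lemma 3.1) of the DBI framework. -/
theorem dbi_step_left (s d t lam L Aminus Aplus : ℝ)
    (hs0 : 0 ≤ s) (hs1 : s ≤ 1) (hd : 0 < d) (ht : t ≤ 0)
    (hBmneg : (Aminus - lam) * d / (1 - t) < 0)
    (hBppos : 0 < (Aplus - lam) * d / (1 - t))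
    (hL1 : (Aminus - lam) * d / (1 - t) ≤ L)
    (hL2 : L ≤ (Aplus - lam) * d / (1 - t)) :
    Aminus ≤ lam + ((s - t) / d) * L ∧ lam + ((s - t) / d) * L ≤ Aplus := by
  have h1t : 0 < 1 - t := by linarith
  have hr : 0 < d / (1 - t) := div_pos hd h1t
  simp only [mul_div_assoc] at hBmneg hBppos hL1 hL2
  have hx : L / (d / (1 - t)) ∈ Icc (Aminus - lam) (Aplus - lam) :=
    ⟨(le_div_iff₀ hr).2 hL1, (div_le_iff₀ hr).2 hL2⟩
  have hc : (s - t) / (1 - t) ∈ Icc 0 1 :=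
    sub_div_sub_mem_Icc (ht.trans hs0) hs1 (by linarith)
  have hrescale : (s - t) / d * L = (s - t) / (1 - t) * (L / (d / (1 - t))) := by
    field_simp
  obtain ⟨hlow, hupp⟩ := mul_mem_Icc_of_mem_Icc (neg_of_mul_neg_left hBmneg hr.le).le
    (pos_of_mul_pos_left hBppos hr.le).le hx hc
  rw [hrescale]
  constructor <;> linarith
end

section
/- Let s ∈ [0,1] be a real number, let d > 0 and let t > 1 be real numbers. Let λ, L, A⁻, A⁺ be real numbers and set B⁻ = (A⁺ − λ)·d/(−t) and B⁺ = (A⁻ − λ)·d/(−t). If B⁻ < 0, B⁺ > 0, and B⁻ ≤ L ≤ B⁺, then A⁻ ≤ λ + ((s − t)/d)·L ≤ A⁺. -/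
/-!
Multiplying `B⁻ ≤ L ≤ B⁺` by the non-positive factor `(s - t) / d` reverses it and turns `B^∓`
into `r (A^± - λ)` with `r = (t - s) / t ≤ 1` (as `0 ≤ s`). The sign conditions on `B^∓` say
`A⁻ - λ < 0 < A⁺ - λ`, so the factor `r ≤ 1` can only move `r (A^± - λ)` towards zero, which
gives `A⁻ - λ ≤ r (A⁻ - λ)` and `r (A⁺ - λ) ≤ A⁺ - λ`.
-/

theorem sub_div_mul_mul_div_neg {K : Type*} [Field K] {a d t : K} (s : K) (hd : d ≠ 0)
    (ht : t ≠ 0) : (s - t) / d * (a * d / -t) = (t - s) / t * a := by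
  field_simp
  ring

section

variable {K : Type*} [Field K] [LinearOrder K] [IsStrictOrderedRing K] {a d t : K}

theorem mul_div_neg_neg_iff (hd : 0 < d) (ht : 0 < t) : a * d / -t < 0 ↔ 0 < a := by
  rw [div_neg, neg_lt_zero, div_pos_iff_of_pos_right ht, mul_pos_iff_of_pos_right hd]

theorem mul_div_neg_pos_iff (hd : 0 < d) (ht : 0 < t) : 0 < a * d / -t ↔ a < 0 := by
  rw [div_neg, neg_pos, div_lt_iff₀ ht, zero_mul, ← neg_pos, ← neg_mul,
    mul_pos_iff_of_pos_right hd, neg_pos]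

end

/-- Case II (t > 1) of the single-step induction lemma (Lemma 3.1) of the DBI framework. -/
theorem dbi_step_right (s d t lam L Aminus Aplus : ℝ)
    (hs0 : 0 ≤ s) (hs1 : s ≤ 1) (hd : 0 < d) (ht : 1 < t)
    (hBmneg : (Aplus - lam) * d / (-t) < 0)
    (hBppos : 0 < (Aminus - lam) * d / (-t))
    (hL1 : (Aplus - lam) * d / (-t) ≤ L)
    (hL2 : L ≤ (Aminus - lam) * d / (-t)) :
    Aminus ≤ lam + ((s - t) / d) * L ∧ lam + ((s - t) / d) * L ≤ Aplus := by
  have ht0 : 0 < t := by linarith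
  have hc : (s - t) / d ≤ 0 := div_nonpos_of_nonpos_of_nonneg (by linarith) hd.le
  have hr : (t - s) / t ≤ 1 := (div_le_one ht0).2 (by linarith)
  have hAminus : Aminus - lam ≤ 0 := ((mul_div_neg_pos_iff hd ht0).1 hBppos).le
  have hAplus : 0 ≤ Aplus - lam := ((mul_div_neg_neg_iff hd ht0).1 hBmneg).le
  have hscale (a : ℝ) := sub_div_mul_mul_div_neg (a := a) s hd.ne' ht0.ne'
  constructor
  · calc Aminus = lam + (Aminus - lam) := by ring
      _ ≤ lam + (t - s) / t * (Aminus - lam) := by grw [← le_mul_of_le_one_left hAminus hr]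
      _ = lam + (s - t) / d * ((Aminus - lam) * d / -t) := by rw [hscale]
      _ ≤ lam + (s - t) / d * L := by grw [mul_le_mul_of_nonpos_left hL2 hc]
  · calc lam + (s - t) / d * L ≤ lam + (s - t) / d * ((Aplus - lam) * d / -t) := by
          grw [mul_le_mul_of_nonpos_left hL1 hc]
      _ = lam + (t - s) / t * (Aplus - lam) := by rw [hscale]
      _ ≤ lam + (Aplus - lam) := by grw [mul_le_of_le_one_left hAplus hr]
      _ = Aplus := by ring
end

section
/- Let n ≥ 2 be an integer and s ∈ [0,1] a real number. Let d_1, …, d_{n−1} be positive reals, let t_2, …, t_{n−1} be reals each satisfying t_j ≤ 0 or t_j > 1, and let λ̄_1, …, λ̄_{n−1} be reals. Define B_1⁻ = −d_1, B_1⁺ = d_1, and for 2 ≤ j ≤ n−1: if t_j ≤ 0 then B_j⁻ = (B_{j−1}⁻ − λ̄_{j−1})·d_j/(1−t_j) and B_j⁺ = (B_{j−1}⁺ − λ̄_{j−1})·d_j/(1−t_j); if t_j > 1 then B_j⁻ = (B_{j−1}⁺ − λ̄_{j−1})·d_j/(−t_j) and B_j⁺ = (B_{j−1}⁻ − λ̄_{j−1})·d_j/(−t_j).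 Define Q_n = λ̄_{n−1} and, for j = n−1 down to 2, Q_j = λ̄_{j−1} + ((s − t_j)/d_j)·Q_{j+1}, and set S = s + (s(s−1)/d_1)·Q_2. If B_j⁻ < 0, B_j⁺ > 0, and B_j⁻ ≤ λ̄_j ≤ B_j⁺ for every 1 ≤ j ≤ n−1, then 0 ≤ S ≤ 1. -/
/-!
Reading the nested form from the inside out, `Q_{j+1} ∈ [B_j⁻, B_j⁺]` forces
`Q_j ∈ [B_{j-1}⁻, B_{j-1}⁺]`: solved for `B_{j-1}^±`, the recursion says
`B_{j-1}^± = λ̄_{j-1} + ((1 - t_j)/d_j) B_j^±` (or `(-t_j)/d_j` with `B_j^∓` when `t_j > 1`),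
and the factor `(s - t_j)/d_j` of `Q_{j+1}` in `Q_j` has the same sign as, and smaller
modulus than, that coefficient, while `[B_j⁻, B_j⁺]` contains `0`. Starting from
`Q_n = λ̄_{n-1}` this gives `|Q_2| ≤ d_1`, hence `s² ≤ S ≤ 1 - (1 - s)²`.
-/

open Set

lemma mul_mem_Icc_mul_of_le {a b q lo hi : ℝ} (ha : 0 ≤ a) (hab : a ≤ b)
    (hlo : lo ≤ 0) (hhi : 0 ≤ hi) (hq : q ∈ Icc lo hi) :
    a * q ∈ Icc (b * lo) (b * hi) :=
  ⟨by nlinarith [hq.1], by nlinarith [hq.2]⟩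

lemma mul_mem_Icc_mul_of_le_of_nonpos {a b q lo hi : ℝ} (ha : a ≤ 0) (hba : b ≤ a)
    (hlo : lo ≤ 0) (hhi : 0 ≤ hi) (hq : q ∈ Icc lo hi) :
    a * q ∈ Icc (b * hi) (b * lo) := by
  obtain ⟨h₁, h₂⟩ := mul_mem_Icc_mul_of_le (neg_nonneg.2 ha) (neg_le_neg hba) hlo hhi hq
  exact ⟨by linarith, by linarith⟩

lemma eq_add_div_mul_of_eq_sub_mul_div {B B' lam c d : ℝ} (hc : c ≠ 0) (hd : d ≠ 0)
    (h : B' = (B - lam) * d / c) : B = lam + c / d * B' := by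
  rw [h]; field_simp; ring

section NestedStep

variable {s t d lam Bm Bp Bm' Bp' q : ℝ}

lemma add_div_mul_mem_Icc_of_lt_one (ht : t < 1) (hts : t ≤ s) (hs : s ≤ 1) (hd : 0 < d)
    (hm : Bm' = (Bm - lam) * d / (1 - t)) (hp : Bp' = (Bp - lam) * d / (1 - t))
    (hBm' : Bm' < 0) (hBp' : 0 < Bp') (hq : q ∈ Icc Bm' Bp') :
    lam + (s - t) / d * q ∈ Icc Bm Bp := by
  have hc : 1 - t ≠ 0 := by linarith
  rw [eq_add_div_mul_of_eq_sub_mul_div hc hd.ne' hm,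
    eq_add_div_mul_of_eq_sub_mul_div hc hd.ne' hp]
  have hmul := mul_mem_Icc_mul_of_le (div_nonneg (sub_nonneg.2 hts) hd.le)
    (div_le_div_of_nonneg_right (by linarith : s - t ≤ 1 - t) hd.le) hBm'.le hBp'.le hq
  exact ⟨by linarith [hmul.1], by linarith [hmul.2]⟩

lemma add_div_mul_mem_Icc_of_pos (ht : 0 < t) (hs : 0 ≤ s) (hst : s ≤ t) (hd : 0 < d)
    (hm : Bm' = (Bp - lam) * d / (-t)) (hp : Bp' = (Bm - lam) * d / (-t))
    (hBm' : Bm' < 0) (hBp' : 0 < Bp') (hq : q ∈ Icc Bm' Bp') :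
    lam + (s - t) / d * q ∈ Icc Bm Bp := by
  have hc : -t ≠ 0 := by linarith
  rw [eq_add_div_mul_of_eq_sub_mul_div hc hd.ne' hm,
    eq_add_div_mul_of_eq_sub_mul_div hc hd.ne' hp]
  have hmul := mul_mem_Icc_mul_of_le_of_nonpos (div_nonpos_of_nonpos_of_nonneg
    (sub_nonpos.2 hst) hd.le) (div_le_div_of_nonneg_right (by linarith : -t ≤ s - t) hd.le)
    hBm'.le hBp'.le hq
  exact ⟨by linarith [hmul.1], by linarith [hmul.2]⟩

end NestedStep

lemma add_mul_div_mul_mem_unitInterval {s d q : ℝ} (hs0 : 0 ≤ s) (hs1 : s ≤ 1) (hd : 0 < d)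
    (hq : q ∈ Icc (-d) d) : s + s * (s - 1) / d * q ∈ Icc 0 1 := by
  have ha : s * (s - 1) / d ≤ 0 := div_nonpos_of_nonpos_of_nonneg (by nlinarith) hd.le
  obtain ⟨h₁, h₂⟩ := mul_mem_Icc_mul_of_le_of_nonpos ha le_rfl (by linarith) hd.le hq
  have hdd : s * (s - 1) / d * d = s * (s - 1) := div_mul_cancel₀ _ hd.ne'
  constructor <;> nlinarith

/-- Main data-bounded interpolation (DBI) theorem (Theorem 3.1):
if the scaled divided-difference products λ̄_j satisfy the recursively defined
bounds B_j⁻ ≤ λ̄_j ≤ B_j⁺ (with B_j⁻ < 0 < B_j⁺), then the nested form S of the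
Newton interpolant satisfies 0 ≤ S ≤ 1. -/
theorem dbi_main (n : ℕ) (hn : 2 ≤ n) (s : ℝ) (hs0 : 0 ≤ s) (hs1 : s ≤ 1)
    (d t lam Bminus Bplus Q : ℕ → ℝ)
    (hd : ∀ j, 1 ≤ j → j ≤ n - 1 → 0 < d j)
    (ht : ∀ j, 2 ≤ j → j ≤ n - 1 → t j ≤ 0 ∨ 1 < t j)
    (hBm1 : Bminus 1 = -d 1) (hBp1 : Bplus 1 = d 1)
    (hBrec_le : ∀ j, 2 ≤ j → j ≤ n - 1 → t j ≤ 0 →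
      Bminus j = (Bminus (j - 1) - lam (j - 1)) * d j / (1 - t j) ∧
      Bplus j = (Bplus (j - 1) - lam (j - 1)) * d j / (1 - t j))
    (hBrec_gt : ∀ j, 2 ≤ j → j ≤ n - 1 → 1 < t j →
      Bminus j = (Bplus (j - 1) - lam (j - 1)) * d j / (-t j) ∧
      Bplus j = (Bminus (j - 1) - lam (j - 1)) * d j / (-t j))
    (hQn : Q n = lam (n - 1))
    (hQ : ∀ j, 2 ≤ j → j ≤ n - 1 → Q j = lam (j - 1) + ((s - t j) / d j) * Q (j + 1))
    (hB : ∀ j, 1 ≤ j → j ≤ n - 1 →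
      Bminus j < 0 ∧ 0 < Bplus j ∧ Bminus j ≤ lam j ∧ lam j ≤ Bplus j) :
    0 ≤ s + (s * (s - 1) / d 1) * Q 2 ∧ s + (s * (s - 1) / d 1) * Q 2 ≤ 1 := by
  have hQ2 : Q 2 ∈ Icc (Bminus 1) (Bplus 1) := by
    refine Nat.decreasingInduction' (P := fun j ↦ Q j ∈ Icc (Bminus (j - 1)) (Bplus (j - 1)))
      (fun j hjn hj hQsucc ↦ ?_) hn ?_
    · obtain ⟨hBm, hBp, -, -⟩ := hB j (by omega) (by omega)
      rw [hQ j hj (by omega)]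
      rcases ht j hj (by omega) with htj | htj
      · obtain ⟨hm, hp⟩ := hBrec_le j hj (by omega) htj
        exact add_div_mul_mem_Icc_of_lt_one (by linarith) (by linarith) hs1 (hd j (by omega) (by omega))
          hm hp hBm hBp hQsucc
      · obtain ⟨hm, hp⟩ := hBrec_gt j hj (by omega) htj
        exact add_div_mul_mem_Icc_of_pos (by linarith) hs0 (by linarith) (hd j (by omega) (by omega))
          hm hp hBm hBp hQsucc
    · obtain ⟨-, -, hlo, hhi⟩ := hB (n - 1) (by omega) le_rfl
      exact hQn ▸ ⟨hlo, hhi⟩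
  rw [hBm1, hBp1] at hQ2
  exact add_mul_div_mul_mem_unitInterval hs0 hs1 (hd 1 le_rfl (by omega)) hQ2
end

section
/- Let n ≥ 2 be an integer, s ∈ [0,1] a real number, and let m_ℓ ≤ 0 and m_r ≥ 1 be reals. Let d_1, …, d_{n−1} be positive reals, let t_2, …, t_{n−1} be reals each satisfying t_j ≤ 0 or t_j > 1, and let λ̄_1, …, λ̄_{n−1} be reals. Define B_1⁻ = (−4(m_r − 1) − 1)·d_1, B_1⁺ = (−4·m_ℓ + 1)·d_1, and for 2 ≤ j ≤ n−1: if t_j ≤ 0 then B_j⁻ = (B_{j−1}⁻ − λ̄_{j−1})·d_j/(1−t_j) and B_j⁺ = (B_{j−1}⁺ − λ̄_{j−1})·d_j/(1−t_j); if t_j > 1 then B_j⁻ = (B_{j−1}⁺ − λ̄_{j−1})·d_j/(−t_j) and B_j⁺ = (B_{j−1}⁻ − λ̄_{j−1})·d_j/(−t_j). Define Q_n = λ̄_{n−1} and, for j = n−1 down to 2, Q_j = λ̄_{j−1} + ((s − t_j)/d_j)·Q_{j+1}, and set S = s + (s(s−1)/d_1)·Q_2. If B_j⁻ < 0, B_j⁺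 > 0, and B_j⁻ ≤ λ̄_j ≤ B_j⁺ for every 1 ≤ j ≤ n−1, then m_ℓ ≤ S ≤ m_r. -/
/-!
Write `Q_j = λ̄_{j-1} + c_j Q_{j+1}` with `c_j = (s - t_j)/d_j`. Because `0 ≤ s ≤ 1` and
`t_j ∉ (0, 1]`, the factor `c_j` has the sign of `(1 - t_j)/d_j` (if `t_j ≤ 0`) or of `-t_j/d_j`
(if `t_j > 1`) and is no larger in absolute value. Since the interval `[B_j⁻, B_j⁺]` contains `0`,
shrinking the factor keeps the product inside the scaled interval, and the recursion for the `B_j`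
is exactly this scaling. Backward induction from `Q_n = λ̄_{n-1}` thus gives
`Q_j ∈ [B_{j-1}⁻, B_{j-1}⁺]`, in particular `Q_2 ∈ [B_1⁻, B_1⁺]`. As `s(s-1)/d_1 ≤ 0`, the bounds
on `S` reduce to `s + s(s-1)(1-4m_ℓ) - m_ℓ = s² - m_ℓ(2s-1)² ≥ 0` and
`m_r - s - s(s-1)(3-4m_r) = (1-s)² + (m_r-1)(1-2s)² ≥ 0`.
-/

open Set

lemma mul_mem_Icc_of_nonneg_of_le_s4 {a b q c c' : ℝ} (hc : 0 ≤ c) (hcc' : c ≤ c')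
    (ha : a ≤ 0) (hb : 0 ≤ b) (hq : q ∈ Icc a b) : c * q ∈ Icc (c' * a) (c' * b) := by
  obtain ⟨hqa, hqb⟩ := hq
  constructor <;> nlinarith [mul_le_mul_of_nonneg_left hqa hc, mul_le_mul_of_nonneg_left hqb hc]

lemma mul_mem_Icc_of_nonpos_of_le_s4 {a b q c c' : ℝ} (hc : c ≤ 0) (hcc' : c' ≤ c)
    (ha : a ≤ 0) (hb : 0 ≤ b) (hq : q ∈ Icc a b) : c * q ∈ Icc (c' * b) (c' * a) := by
  obtain ⟨hqa, hqb⟩ := hq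
  constructor <;> nlinarith [mul_le_mul_of_nonpos_left hqa hc, mul_le_mul_of_nonpos_left hqb hc]

lemma eq_div_iff_mul_div_eq {x y d e : ℝ} (hd : 0 < d) (he : e ≠ 0) :
    x = y * d / e ↔ e / d * x = y := by
  constructor <;> intro h
  · rw [h]; field_simp
  · rw [← h]; field_simp

lemma add_div_mul_mem_Icc_of_bounds {s t d lam q Bm Bp Bm' Bp' : ℝ} (hs0 : 0 ≤ s) (hs1 : s ≤ 1)
    (hd : 0 < d) (ht : t ≤ 0 ∨ 1 < t)
    (hle : t ≤ 0 → Bm = (Bm' - lam) * d / (1 - t) ∧ Bp = (Bp' - lam) * d / (1 - t))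
    (hgt : 1 < t → Bm = (Bp' - lam) * d / (-t) ∧ Bp = (Bm' - lam) * d / (-t))
    (hBm : Bm < 0) (hBp : 0 < Bp) (hq : q ∈ Icc Bm Bp) :
    lam + (s - t) / d * q ∈ Icc Bm' Bp' := by
  rcases ht with ht | ht
  · obtain ⟨hm, hp⟩ := hle ht
    rw [eq_div_iff_mul_div_eq hd (by linarith)] at hm hp
    have := mul_mem_Icc_of_nonneg_of_le_s4 (c := (s - t) / d) (c' := (1 - t) / d)
      (div_nonneg (by linarith) hd.le) (by gcongr) hBm.le hBp.le hq
    rw [hm, hp] at this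
    constructor <;> linarith [this.1, this.2]
  · obtain ⟨hm, hp⟩ := hgt ht
    rw [eq_div_iff_mul_div_eq hd (by linarith)] at hm hp
    have := mul_mem_Icc_of_nonpos_of_le_s4 (c := (s - t) / d) (c' := -t / d)
      (div_nonpos_of_nonpos_of_nonneg (by linarith) hd.le) (by gcongr; linarith) hBm.le hBp.le hq
    rw [hm, hp] at this
    constructor <;> linarith [this.1, this.2]

lemma le_add_mul_div_mul_of_mem_Icc {s d q ml mr : ℝ} (hs0 : 0 ≤ s) (hs1 : s ≤ 1)
    (hml : ml ≤ 0) (hmr : 1 ≤ mr) (hd : 0 < d)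
    (hq : q ∈ Icc ((-4 * (mr - 1) - 1) * d) ((-4 * ml + 1) * d)) :
    ml ≤ s + s * (s - 1) / d * q ∧ s + s * (s - 1) / d * q ≤ mr := by
  have hc : s * (s - 1) / d ≤ 0 := div_nonpos_of_nonpos_of_nonneg (by nlinarith) hd.le
  have hlo := mul_le_mul_of_nonpos_left hq.2 hc
  have hhi := mul_le_mul_of_nonpos_left hq.1 hc
  constructor
  · calc ml ≤ s + s * (s - 1) * (-4 * ml + 1) := by
          nlinarith [mul_nonpos_of_nonpos_of_nonneg hml (sq_nonneg (2 * s - 1))]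
      _ = s + s * (s - 1) / d * ((-4 * ml + 1) * d) := by field_simp
      _ ≤ _ := by linarith
  · calc s + s * (s - 1) / d * q ≤ s + s * (s - 1) / d * ((-4 * (mr - 1) - 1) * d) := by linarith
      _ = s + s * (s - 1) * (-4 * (mr - 1) - 1) := by field_simp
      _ ≤ mr := by
          nlinarith [mul_nonneg (sub_nonneg.2 hmr) (sq_nonneg (1 - 2 * s)), sq_nonneg (1 - s)]

/-- Main constrained positivity-preserving interpolation (PPI) theorem (Theorem 4.1):
with the relaxed starting bounds B_1⁻ = (−4(m_r−1)−1)d_1, B_1⁺ = (−4m_ℓ+1)d_1,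
if B_j⁻ ≤ λ̄_j ≤ B_j⁺ (with B_j⁻ < 0 < B_j⁺), then m_ℓ ≤ S ≤ m_r for the nested
form S of the Newton interpolant. -/
theorem ppi_main (n : ℕ) (hn : 2 ≤ n) (s : ℝ) (hs0 : 0 ≤ s) (hs1 : s ≤ 1)
    (ml mr : ℝ) (hml : ml ≤ 0) (hmr : 1 ≤ mr)
    (d t lam Bminus Bplus Q : ℕ → ℝ)
    (hd : ∀ j, 1 ≤ j → j ≤ n - 1 → 0 < d j)
    (ht : ∀ j, 2 ≤ j → j ≤ n - 1 → t j ≤ 0 ∨ 1 < t j)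
    (hBm1 : Bminus 1 = (-4 * (mr - 1) - 1) * d 1)
    (hBp1 : Bplus 1 = (-4 * ml + 1) * d 1)
    (hBrec_le : ∀ j, 2 ≤ j → j ≤ n - 1 → t j ≤ 0 →
      Bminus j = (Bminus (j - 1) - lam (j - 1)) * d j / (1 - t j) ∧
      Bplus j = (Bplus (j - 1) - lam (j - 1)) * d j / (1 - t j))
    (hBrec_gt : ∀ j, 2 ≤ j → j ≤ n - 1 → 1 < t j →
      Bminus j = (Bplus (j - 1) - lam (j - 1)) * d j / (-t j) ∧
      Bplus j = (Bminus (j - 1) - lam (j - 1)) * d j / (-t j))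
    (hQn : Q n = lam (n - 1))
    (hQ : ∀ j, 2 ≤ j → j ≤ n - 1 → Q j = lam (j - 1) + ((s - t j) / d j) * Q (j + 1))
    (hB : ∀ j, 1 ≤ j → j ≤ n - 1 →
      Bminus j < 0 ∧ 0 < Bplus j ∧ Bminus j ≤ lam j ∧ lam j ≤ Bplus j) :
    ml ≤ s + (s * (s - 1) / d 1) * Q 2 ∧ s + (s * (s - 1) / d 1) * Q 2 ≤ mr := by
  have hQ2 : Q 2 ∈ Icc (Bminus 1) (Bplus 1) := by
    refine Nat.decreasingInduction' (P := fun j => Q j ∈ Icc (Bminus (j - 1)) (Bplus (j - 1)))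
      (fun j hjn h2j ih => ?_) hn ?_
    · obtain ⟨hBm, hBp, -, -⟩ := hB j (by omega) (by omega)
      rw [hQ j h2j (by omega)]
      exact add_div_mul_mem_Icc_of_bounds hs0 hs1 (hd j (by omega) (by omega))
        (ht j h2j (by omega)) (hBrec_le j h2j (by omega)) (hBrec_gt j h2j (by omega)) hBm hBp ih
    · obtain ⟨-, -, hlo, hhi⟩ := hB (n - 1) (by omega) le_rfl
      exact hQn ▸ ⟨hlo, hhi⟩
  rw [hBm1, hBp1] at hQ2
  exact le_add_mul_div_mul_of_mem_Icc hs0 hs1 hml hmr (hd 1 le_rfl (by omega)) hQ2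
end

section
/- Let d > 0, let m_ℓ ≤ 0 and m_r ≥ 1 be reals, and let λ be a real number with (−4(m_r − 1) − 1)·d ≤ λ ≤ (−4·m_ℓ + 1)·d. Then for every s ∈ [0,1], m_ℓ ≤ s + (s(s−1)/d)·λ ≤ m_r. -/
/-!
With `μ = λ / d` the interpolant is `s - s(1 - s) μ`. Since `1 - 4 s (1 - s) = (2s - 1)²`, each
gap to a constraint splits as `s(1 - s)` times the slack in the bound on `μ`, plus a sum of
squares weighted by `-m_ℓ ≥ 0` or `m_r - 1 ≥ 0`.
-/

/-- The quadratic truncation `s + s (s - 1) μ` of the nested Newton form, with `μ = λ̄₁ / d₁`. -/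
def nestedQuadratic (μ s : ℝ) : ℝ := s + s * (s - 1) * μ

section

variable {μ s : ℝ}

theorem le_nestedQuadratic {ml : ℝ} (hml : ml ≤ 0) (hs0 : 0 ≤ s) (hs1 : s ≤ 1)
    (hμ : μ ≤ -4 * ml + 1) : ml ≤ nestedQuadratic μ s := by
  have gap : nestedQuadratic μ s - ml
      = s * (1 - s) * (-4 * ml + 1 - μ) + (s ^ 2 - ml * (2 * s - 1) ^ 2) := by
    unfold nestedQuadratic; ring
  have slack : 0 ≤ s * (1 - s) * (-4 * ml + 1 - μ) :=
    mul_nonneg (mul_nonneg hs0 (sub_nonneg.2 hs1)) (sub_nonneg.2 hμ)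
  have squares : ml * (2 * s - 1) ^ 2 ≤ 0 := mul_nonpos_of_nonpos_of_nonneg hml (sq_nonneg _)
  linarith [sq_nonneg s]

theorem nestedQuadratic_le {mr : ℝ} (hmr : 1 ≤ mr) (hs0 : 0 ≤ s) (hs1 : s ≤ 1)
    (hμ : -4 * (mr - 1) - 1 ≤ μ) : nestedQuadratic μ s ≤ mr := by
  have gap : mr - nestedQuadratic μ s
      = s * (1 - s) * (μ - (-4 * (mr - 1) - 1)) + ((mr - 1) * (2 * s - 1) ^ 2 + (1 - s) ^ 2) := by
    unfold nestedQuadratic; ring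
  have slack : 0 ≤ s * (1 - s) * (μ - (-4 * (mr - 1) - 1)) :=
    mul_nonneg (mul_nonneg hs0 (sub_nonneg.2 hs1)) (sub_nonneg.2 hμ)
  have squares : 0 ≤ (mr - 1) * (2 * s - 1) ^ 2 + (1 - s) ^ 2 := by
    have := sub_nonneg.2 hmr
    positivity
  linarith

end

/-- Quadratic base case of the PPI construction: the relaxed bound on λ̄_1 implies
m_ℓ ≤ s + (s(s−1)/d)·λ ≤ m_r for all s ∈ [0,1]. -/
theorem ppi_quadratic (d ml mr lam : ℝ) (hd : 0 < d) (hml : ml ≤ 0) (hmr : 1 ≤ mr)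
    (h1 : (-4 * (mr - 1) - 1) * d ≤ lam) (h2 : lam ≤ (-4 * ml + 1) * d) :
    ∀ s : ℝ, 0 ≤ s → s ≤ 1 →
      ml ≤ s + (s * (s - 1) / d) * lam ∧ s + (s * (s - 1) / d) * lam ≤ mr := by
  intro s hs0 hs1
  have hμ_lower : -4 * (mr - 1) - 1 ≤ lam / d := (le_div_iff₀ hd).2 h1
  have hμ_upper : lam / d ≤ -4 * ml + 1 := (div_le_iff₀ hd).2 h2
  have hform : s + (s * (s - 1) / d) * lam = nestedQuadratic (lam / d) s := by
    unfold nestedQuadratic; ring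
  rw [hform]
  exact ⟨le_nestedQuadratic hml hs0 hs1 hμ_upper, nestedQuadratic_le hmr hs0 hs1 hμ_lower⟩
end

section
/- Let d_1, d_2 > 0, let t_2 ≤ 0, and let λ̄_1, λ̄_2 be real numbers such that −d_1 ≤ λ̄_1 ≤ d_1 and (d_2/(1−t_2))·(−d_1 − λ̄_1) ≤ λ̄_2 ≤ (d_2/(1−t_2))·(d_1 − λ̄_1). Then for every s ∈ [0,1], −d_1 ≤ λ̄_1 + ((s − t_2)/d_2)·λ̄_2 ≤ d_1. -/
open Set

/-- `hlo` and `hhi` say that the value `x + m / c` at `θ = 1` lies in `[a, b]`, as does the value `x`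
at `θ = 0`; convexity of `[a, b]` does the rest. -/
theorem add_mul_div_mem_Icc {a b x m c θ : ℝ} (hc : 0 < c) (hx : x ∈ Icc a b)
    (hlo : c * (a - x) ≤ m) (hhi : m ≤ c * (b - x)) (hθ : θ ∈ Icc (0 : ℝ) 1) :
    x + θ * (m / c) ∈ Icc a b := by
  have hend : x + m / c ∈ Icc a b :=
    ⟨by linarith [(le_div_iff₀' hc).2 hlo], by linarith [(div_le_iff₀' hc).2 hhi]⟩
  simpa using (convex_Icc a b).add_smul_sub_mem hx hend hθ

theorem dbi_cubic_left_general (d1 d2 t2 lam1 lam2 : ℝ)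
    (hd2 : 0 < d2) (ht2 : t2 ≤ 0)
    (h1 : -d1 ≤ lam1) (h2 : lam1 ≤ d1)
    (h3 : d2 / (1 - t2) * (-d1 - lam1) ≤ lam2)
    (h4 : lam2 ≤ d2 / (1 - t2) * (d1 - lam1)) :
    ∀ s : ℝ, 0 ≤ s → s ≤ 1 →
      -d1 ≤ lam1 + ((s - t2) / d2) * lam2 ∧ lam1 + ((s - t2) / d2) * lam2 ≤ d1 := by
  intro s hs0 hs1
  have ht : 0 < 1 - t2 := by linarith
  have hθ : (s - t2) / (1 - t2) ∈ Icc (0 : ℝ) 1 :=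
    ⟨div_nonneg (by linarith) ht.le, (div_le_one ht).2 (by linarith)⟩
  have hmem := add_mul_div_mem_Icc (div_pos hd2 ht) ⟨h1, h2⟩ h3 h4 hθ
  have hrw : (s - t2) / (1 - t2) * (lam2 / (d2 / (1 - t2))) = (s - t2) / d2 * lam2 := by
    field_simp
  rwa [hrw] at hmem

/-- Cubic step of the DBI construction, stencil point added to the left (t₂ ≤ 0). -/
theorem dbi_cubic_left (d1 d2 t2 lam1 lam2 : ℝ)
    (hd1 : 0 < d1) (hd2 : 0 < d2) (ht2 : t2 ≤ 0)
    (h1 : -d1 ≤ lam1) (h2 : lam1 ≤ d1)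
    (h3 : d2 / (1 - t2) * (-d1 - lam1) ≤ lam2)
    (h4 : lam2 ≤ d2 / (1 - t2) * (d1 - lam1)) :
    ∀ s : ℝ, 0 ≤ s → s ≤ 1 →
      -d1 ≤ lam1 + ((s - t2) / d2) * lam2 ∧ lam1 + ((s - t2) / d2) * lam2 ≤ d1 :=
  dbi_cubic_left_general d1 d2 t2 lam1 lam2 hd2 ht2 h1 h2 h3 h4
end

section
/- Let d_1, d_2 > 0, let t_2 > 1, and let λ̄_1, λ̄_2 be real numbers such that −d_1 ≤ λ̄_1 ≤ d_1 and (d_2/(−t_2))·(d_1 − λ̄_1) ≤ λ̄_2 ≤ (d_2/(−t_2))·(−d_1 − λ̄_1). Then for every s ∈ [0,1], −d_1 ≤ λ̄_1 + ((s − t_2)/d_2)·λ̄_2 ≤ d_1. -/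
theorem Convex.add_sub_mul_mem {K : Set ℝ} (hK : Convex ℝ K) {a c t s : ℝ}
    (ha : a ∈ K) (hat : a - t * c ∈ K) (ht : 0 < t) (hs0 : 0 ≤ s) (hst : s ≤ t) :
    a + (s - t) * c ∈ K := by
  have hcombo : (1 - s / t) • (a - t * c) + (s / t) • a = a + (s - t) * c := by
    simp only [smul_eq_mul]
    field_simp
    ring
  rw [← hcombo]
  exact hK hat ha (by rw [sub_nonneg]; exact div_le_one_of_le₀ hst ht.le)
    (div_nonneg hs0 ht.le) (sub_add_cancel 1 _)

theorem div_neg_mul_le_iff {d t x y : ℝ} (hd : 0 < d) (ht : 0 < t) :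
    d / -t * x ≤ y ↔ -x ≤ t * (y / d) := by
  rw [div_neg, neg_mul, neg_le, div_mul_eq_mul_div, le_div_iff₀ ht, mul_div_assoc',
    le_div_iff₀ hd]
  constructor <;> intro h <;> linarith

theorem le_div_neg_mul_iff {d t x y : ℝ} (hd : 0 < d) (ht : 0 < t) :
    y ≤ d / -t * x ↔ t * (y / d) ≤ -x := by
  rw [div_neg, neg_mul, le_neg, div_mul_eq_mul_div, div_le_iff₀ ht, mul_div_assoc',
    div_le_iff₀ hd]
  constructor <;> intro h <;> linarith

theorem dbi_cubic_right_general (d1 d2 t2 lam1 lam2 : ℝ)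
    (hd2 : 0 < d2) (ht2 : 1 < t2)
    (h1 : -d1 ≤ lam1) (h2 : lam1 ≤ d1)
    (h3 : d2 / (-t2) * (d1 - lam1) ≤ lam2)
    (h4 : lam2 ≤ d2 / (-t2) * (-d1 - lam1)) :
    ∀ s : ℝ, 0 ≤ s → s ≤ 1 →
      -d1 ≤ lam1 + ((s - t2) / d2) * lam2 ∧ lam1 + ((s - t2) / d2) * lam2 ≤ d1 := by
  intro s hs0 hs1
  have ht0 : 0 < t2 := by linarith
  rw [div_neg_mul_le_iff hd2 ht0] at h3
  rw [le_div_neg_mul_iff hd2 ht0] at h4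
  -- `s = t2` and `s = 0` are the two ends of the segment; the hypotheses bound the value at `0`.
  have hs : lam1 + (s - t2) * (lam2 / d2) ∈ Set.Icc (-d1) d1 :=
    (convex_Icc (-d1) d1).add_sub_mul_mem ⟨h1, h2⟩ ⟨by linarith, by linarith⟩ ht0 hs0
      (by linarith)
  rwa [mul_comm_div]

/-- Cubic step of the DBI construction, stencil point added to the right (t₂ > 1). -/
theorem dbi_cubic_right (d1 d2 t2 lam1 lam2 : ℝ)
    (hd1 : 0 < d1) (hd2 : 0 < d2) (ht2 : 1 < t2)
    (h1 : -d1 ≤ lam1) (h2 : lam1 ≤ d1)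
    (h3 : d2 / (-t2) * (d1 - lam1) ≤ lam2)
    (h4 : lam2 ≤ d2 / (-t2) * (-d1 - lam1)) :
    ∀ s : ℝ, 0 ≤ s → s ≤ 1 →
      -d1 ≤ lam1 + ((s - t2) / d2) * lam2 ∧ lam1 + ((s - t2) / d2) * lam2 ≤ d1 :=
  dbi_cubic_right_general d1 d2 t2 lam1 lam2 hd2 ht2 h1 h2 h3 h4
end

section
/- Let d_1, d_2, d_3 > 0, let t_2 ≤ 0 and t_3 ≤ 0, and let λ̄_1, λ̄_2, λ̄_3 be real numbers with −d_1 ≤ λ̄_1 ≤ d_1. Set B_2⁻ = (d_2/(1−t_2))·(−d_1 − λ̄_1), B_2⁺ = (d_2/(1−t_2))·(d_1 − λ̄_1), B_3⁻ = (B_2⁻ − λ̄_2)·d_3/(1−t_3), and B_3⁺ = (B_2⁺ − λ̄_2)·d_3/(1−t_3). If B_2⁻ ≤ λ̄_2 ≤ B_2⁺ and B_3⁻ ≤ λ̄_3 ≤ B_3⁺, then for every s ∈ [0,1], B_2⁻ ≤ λ̄_2 + ((s − t_3)/d_3)·λ̄_3 ≤ B_2⁺. -/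
/-!
With `u = (s - t₃)/d₃ ≥ 0`, scaling the bounds on `λ̄₃` by `u` turns them into
`κ (B₂^± - λ̄₂)` with `κ = (s - t₃)/(1 - t₃) ∈ [0, 1]`. Hence `λ̄₂ + u λ̄₃` lies between
`(1 - κ) λ̄₂ + κ B₂⁻` and `(1 - κ) λ̄₂ + κ B₂⁺`, convex combinations of points of `[B₂⁻, B₂⁺]`.
-/

open Set

lemma add_mem_Icc_of_mul_sub_le {lo hi x y k : ℝ} (hx : x ∈ Icc lo hi) (hk : k ∈ Icc 0 1)
    (hlo : k * (lo - x) ≤ y) (hhi : y ≤ k * (hi - x)) : x + y ∈ Icc lo hi := by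
  obtain ⟨hlox, hxhi⟩ := hx
  obtain ⟨hk0, hk1⟩ := hk
  constructor
  · nlinarith [mul_le_mul_of_nonneg_right hk1 (sub_nonneg.mpr hlox)]
  · nlinarith [mul_le_mul_of_nonneg_right hk1 (sub_nonneg.mpr hxhi)]

lemma sub_div_one_sub_mem_Icc {s t : ℝ} (hts : t ≤ s) (hs : s ≤ 1) :
    (s - t) / (1 - t) ∈ Icc 0 1 :=
  ⟨div_nonneg (by linarith) (by linarith), div_le_one_of_le₀ (by linarith) (by linarith)⟩

lemma div_mul_mul_div_eq {a b d e : ℝ} (hd : d ≠ 0) : a / d * (b * d / e) = a / e * b := by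
  field_simp

theorem dbi_quartic_left_general (d1 d2 d3 t2 t3 lam1 lam2 lam3 : ℝ)
    (hd3 : 0 < d3) (ht3 : t3 ≤ 0)
    (hB2m : d2 / (1 - t2) * (-d1 - lam1) ≤ lam2)
    (hB2p : lam2 ≤ d2 / (1 - t2) * (d1 - lam1))
    (hB3m : (d2 / (1 - t2) * (-d1 - lam1) - lam2) * d3 / (1 - t3) ≤ lam3)
    (hB3p : lam3 ≤ (d2 / (1 - t2) * (d1 - lam1) - lam2) * d3 / (1 - t3)) :
    ∀ s : ℝ, 0 ≤ s → s ≤ 1 →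
      d2 / (1 - t2) * (-d1 - lam1) ≤ lam2 + ((s - t3) / d3) * lam3 ∧
      lam2 + ((s - t3) / d3) * lam3 ≤ d2 / (1 - t2) * (d1 - lam1) := by
  intro s hs0 hs1
  have hu : 0 ≤ (s - t3) / d3 := div_nonneg (by linarith) hd3.le
  have hlo := mul_le_mul_of_nonneg_left hB3m hu
  have hhi := mul_le_mul_of_nonneg_left hB3p hu
  rw [div_mul_mul_div_eq hd3.ne'] at hlo hhi
  exact add_mem_Icc_of_mul_sub_le ⟨hB2m, hB2p⟩ (sub_div_one_sub_mem_Icc (by linarith) hs1) hlo hhi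

/-- Quartic step of the DBI construction with both stencil points added to the left
(t₂ ≤ 0 and t₃ ≤ 0). -/
theorem dbi_quartic_left (d1 d2 d3 t2 t3 lam1 lam2 lam3 : ℝ)
    (hd1 : 0 < d1) (hd2 : 0 < d2) (hd3 : 0 < d3) (ht2 : t2 ≤ 0) (ht3 : t3 ≤ 0)
    (h1 : -d1 ≤ lam1) (h2 : lam1 ≤ d1)
    (hB2m : d2 / (1 - t2) * (-d1 - lam1) ≤ lam2)
    (hB2p : lam2 ≤ d2 / (1 - t2) * (d1 - lam1))
    (hB3m : (d2 / (1 - t2) * (-d1 - lam1) - lam2) * d3 / (1 - t3) ≤ lam3)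
    (hB3p : lam3 ≤ (d2 / (1 - t2) * (d1 - lam1) - lam2) * d3 / (1 - t3)) :
    ∀ s : ℝ, 0 ≤ s → s ≤ 1 →
      d2 / (1 - t2) * (-d1 - lam1) ≤ lam2 + ((s - t3) / d3) * lam3 ∧
      lam2 + ((s - t3) / d3) * lam3 ≤ d2 / (1 - t2) * (d1 - lam1) :=
  dbi_quartic_left_general d1 d2 d3 t2 t3 lam1 lam2 lam3 hd3 ht3 hB2m hB2p hB3m hB3p
end

section
/- Let d > 0, let s ∈ [0,1], and let L, m_ℓ, m_r be real numbers. (i) If m_r ≥ 1 and L ≥ (−4(m_r − 1) − 1)·d, then s + (s(s−1)/d)·L ≤ m_r. (ii) If m_ℓ ≤ 0 and L ≤ (−4·m_ℓ + 1)·d, then s + (s(s−1)/d)·L ≥ m_ℓ. -/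
/-! Write `δ = s + q·(L/d)` with `q = s(s-1) ∈ [-1/4, 0]`. Since `q ≤ 0`, `δ` is monotone
decreasing in `L/d`, so it suffices to check the bounds at the extreme admissible value of `L/d`,
where they reduce to `2s - s² ≤ 1`, `s² ≥ 0` and `0 ≤ -4q ≤ 1`. -/

lemma mul_sub_one_nonpos {s : ℝ} (hs0 : 0 ≤ s) (hs1 : s ≤ 1) : s * (s - 1) ≤ 0 :=
  mul_nonpos_of_nonneg_of_nonpos hs0 (by linarith)

lemma neg_quarter_le_mul_sub_one (s : ℝ) : -(1 / 4) ≤ s * (s - 1) := by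
  nlinarith [sq_nonneg (s - 1 / 2)]

lemma add_mul_mul_sub_one_le {s t m : ℝ} (hs0 : 0 ≤ s) (hs1 : s ≤ 1) (hm : 1 ≤ m)
    (ht : -4 * (m - 1) - 1 ≤ t) : s + s * (s - 1) * t ≤ m := by
  have hq := mul_sub_one_nonpos hs0 hs1
  have hq' := neg_quarter_le_mul_sub_one s
  calc s + s * (s - 1) * t
      ≤ s + s * (s - 1) * (-4 * (m - 1) - 1) := by linarith [mul_le_mul_of_nonpos_left ht hq]
    _ = (1 - (1 - s) ^ 2) + (-4 * (s * (s - 1))) * (m - 1) := by ring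
    _ ≤ 1 + 1 * (m - 1) := by gcongr <;> nlinarith
    _ = m := by ring

lemma le_add_mul_mul_sub_one {s t m : ℝ} (hs0 : 0 ≤ s) (hs1 : s ≤ 1) (hm : m ≤ 0)
    (ht : t ≤ -4 * m + 1) : m ≤ s + s * (s - 1) * t := by
  have hq := mul_sub_one_nonpos hs0 hs1
  have hq' := neg_quarter_le_mul_sub_one s
  calc m
      ≤ s ^ 2 + (-4 * (s * (s - 1))) * m := by nlinarith [sq_nonneg s]
    _ = s + s * (s - 1) * (-4 * m + 1) := by ring
    _ ≤ s + s * (s - 1) * t := by linarith [mul_le_mul_of_nonpos_left ht hq]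

/-- Final step in the proof of the PPI theorem. -/
theorem ppi_final (d s L ml mr : ℝ) (hd : 0 < d) (hs0 : 0 ≤ s) (hs1 : s ≤ 1) :
    (1 ≤ mr → (-4 * (mr - 1) - 1) * d ≤ L → s + (s * (s - 1) / d) * L ≤ mr) ∧
    (ml ≤ 0 → L ≤ (-4 * ml + 1) * d → ml ≤ s + (s * (s - 1) / d) * L) := by
  have hscale : s * (s - 1) / d * L = s * (s - 1) * (L / d) := by ring
  rw [hscale]
  exact ⟨fun hmr hL => add_mul_mul_sub_one_le hs0 hs1 hmr ((le_div_iff₀ hd).mpr hL),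
    fun hml hL => le_add_mul_mul_sub_one hs0 hs1 hml ((div_le_iff₀ hd).mpr hL)⟩
end

section
/- Let n ≥ 2 be an integer, s ∈ [0,1] a real number, and u_i, u_{i+1} real numbers. Let d_1, …, d_{n−1} be positive reals, let t_2, …, t_{n−1} be reals each satisfying t_j ≤ 0 or t_j > 1, and let λ̄_1, …, λ̄_{n−1} be reals. Define B_1⁻ = −d_1, B_1⁺ = d_1, and for 2 ≤ j ≤ n−1: if t_j ≤ 0 then B_j⁻ = (B_{j−1}⁻ − λ̄_{j−1})·d_j/(1−t_j) and B_j⁺ = (B_{j−1}⁺ − λ̄_{j−1})·d_j/(1−t_j); if t_j > 1 then B_j⁻ = (B_{j−1}⁺ − λ̄_{j−1})·d_j/(−t_j) and B_j⁺ = (B_{j−1}⁻ − λ̄_{j−1})·d_j/(−t_j). Define Q_n = λ̄_{n−1} and, for j = n−1 down to 2, Q_j = λ̄_{j−1} + ((s − t_j)/d_j)·Q_{j+1}, and set U = u_i + (u_{i+1} − u_i)·(s + (s(s−1)/d_1)·Q_2). If B_j⁻ < 0, B_j⁺ > 0, and B_j⁻ ≤ λ̄_j ≤ B_j⁺ for every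 1 ≤ j ≤ n−1, then min(u_i, u_{i+1}) ≤ U ≤ max(u_i, u_{i+1}). -/
/-!
Backward induction from `Q n = λ̄ (n-1)` gives `Q (j+1) ∈ [B⁻ j, B⁺ j]` for `j = n-1, …, 1`.
In the step `Q (j+1) = λ̄ j + r * Q (j+2)`, the factor `r = (s - t)/d` lies between `0` and
`R = (1 - t)/d` (if `t ≤ 0`) or `R = -t/d` (if `1 < t`). As `0 ∈ [B⁻, B⁺]`, the product
`r * Q (j+2)` stays between `R * B⁻ (j+1)` and `R * B⁺ (j+1)`, and the recursion for `B` says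
precisely that these are `B^∓ j - λ̄ j`. At `j = 1` this gives `|Q 2| ≤ d 1`, so
`S = s + s (s - 1) Q 2 / d 1` lies in `[s², 1 - (1 - s)²] ⊆ [0, 1]`, and
`U = u_i + (u_{i+1} - u_i) S` is a convex combination of the data.
-/

open Set

theorem add_sub_mul_mem_uIcc {a b S : ℝ} (hS : S ∈ Icc 0 1) : a + (b - a) * S ∈ uIcc a b := by
  rw [← segment_eq_uIcc]
  convert lineMap_mem_segment ℝ a b hS using 1
  rw [AffineMap.lineMap_apply_ring']
  ring

section IntervalProducts

variable {r R q Bm Bp : ℝ}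

theorem mul_mem_Icc_mul_of_mem_Icc_zero (hr : r ∈ Icc 0 R) (hBm : Bm ≤ 0) (hBp : 0 ≤ Bp)
    (hq : q ∈ Icc Bm Bp) : r * q ∈ Icc (R * Bm) (R * Bp) :=
  ⟨(mul_le_mul_of_nonpos_right hr.2 hBm).trans (mul_le_mul_of_nonneg_left hq.1 hr.1),
    (mul_le_mul_of_nonneg_left hq.2 hr.1).trans (mul_le_mul_of_nonneg_right hr.2 hBp)⟩

theorem mul_mem_Icc_mul_of_mem_Icc_nonpos (hr : r ∈ Icc R 0) (hBm : Bm ≤ 0) (hBp : 0 ≤ Bp)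
    (hq : q ∈ Icc Bm Bp) : r * q ∈ Icc (R * Bp) (R * Bm) :=
  ⟨(mul_le_mul_of_nonneg_right hr.1 hBp).trans (mul_le_mul_of_nonpos_left hq.2 hr.2),
    (mul_le_mul_of_nonpos_left hq.1 hr.2).trans (mul_le_mul_of_nonpos_right hr.1 hBm)⟩

end IntervalProducts

theorem add_mul_mem_Icc_of_bounds_recursion {s t d lam q Bm Bp Bm' Bp' : ℝ} (hs : s ∈ Icc 0 1)
    (hd : 0 < d) (ht : t ≤ 0 ∨ 1 < t)
    (hrec_le : t ≤ 0 → Bm' = (Bm - lam) * d / (1 - t) ∧ Bp' = (Bp - lam) * d / (1 - t))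
    (hrec_gt : 1 < t → Bm' = (Bp - lam) * d / (-t) ∧ Bp' = (Bm - lam) * d / (-t))
    (hBm' : Bm' ≤ 0) (hBp' : 0 ≤ Bp') (hq : q ∈ Icc Bm' Bp') :
    lam + (s - t) / d * q ∈ Icc Bm Bp := by
  obtain ⟨hs0, hs1⟩ := hs
  rcases ht with ht | ht
  · obtain ⟨rfl, rfl⟩ := hrec_le ht
    have hr : (s - t) / d ∈ Icc 0 ((1 - t) / d) :=
      ⟨div_nonneg (by linarith) hd.le, div_le_div_of_nonneg_right (by linarith) hd.le⟩
    have hmul := mul_mem_Icc_mul_of_mem_Icc_zero hr hBm' hBp' hq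
    have hcancel (x : ℝ) : (1 - t) / d * (x * d / (1 - t)) = x := by
      have : 1 - t ≠ 0 := by linarith
      field_simp
    rw [hcancel, hcancel] at hmul
    constructor <;> linarith [hmul.1, hmul.2]
  · obtain ⟨rfl, rfl⟩ := hrec_gt ht
    have hr : (s - t) / d ∈ Icc (-t / d) 0 :=
      ⟨div_le_div_of_nonneg_right (by linarith) hd.le,
        div_nonpos_of_nonpos_of_nonneg (by linarith) hd.le⟩
    have hmul := mul_mem_Icc_mul_of_mem_Icc_nonpos hr hBm' hBp' hq
    have hcancel (x : ℝ) : -t / d * (x * d / -t) = x := by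
      have : -t ≠ 0 := by linarith
      field_simp
    rw [hcancel, hcancel] at hmul
    constructor <;> linarith [hmul.1, hmul.2]

theorem add_mul_div_mul_mem_Icc_zero_one {s d q : ℝ} (hs : s ∈ Icc 0 1) (hd : 0 < d)
    (hq : q ∈ Icc (-d) d) : s + s * (s - 1) / d * q ∈ Icc 0 1 := by
  obtain ⟨hs0, hs1⟩ := hs
  obtain ⟨hc1, hc2⟩ : -1 ≤ q / d ∧ q / d ≤ 1 :=
    ⟨(le_div_iff₀ hd).2 (by linarith [hq.1]), (div_le_one hd).2 hq.2⟩
  have hss : 0 ≤ s * (1 - s) := mul_nonneg hs0 (by linarith)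
  rw [show s * (s - 1) / d * q = -(s * (1 - s)) * (q / d) by ring]
  constructor <;> nlinarith

/-- Data-boundedness consequence of the main DBI theorem: the degree-n Newton
interpolant U = u_i + (u_{i+1} − u_i)·S_n is bounded by the data values. -/
theorem dbi_data_bounded (n : ℕ) (hn : 2 ≤ n) (s : ℝ) (hs0 : 0 ≤ s) (hs1 : s ≤ 1)
    (ui ui1 : ℝ)
    (d t lam Bminus Bplus Q : ℕ → ℝ)
    (hd : ∀ j, 1 ≤ j → j ≤ n - 1 → 0 < d j)
    (ht : ∀ j, 2 ≤ j → j ≤ n - 1 → t j ≤ 0 ∨ 1 < t j)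
    (hBm1 : Bminus 1 = -d 1) (hBp1 : Bplus 1 = d 1)
    (hBrec_le : ∀ j, 2 ≤ j → j ≤ n - 1 → t j ≤ 0 →
      Bminus j = (Bminus (j - 1) - lam (j - 1)) * d j / (1 - t j) ∧
      Bplus j = (Bplus (j - 1) - lam (j - 1)) * d j / (1 - t j))
    (hBrec_gt : ∀ j, 2 ≤ j → j ≤ n - 1 → 1 < t j →
      Bminus j = (Bplus (j - 1) - lam (j - 1)) * d j / (-t j) ∧
      Bplus j = (Bminus (j - 1) - lam (j - 1)) * d j / (-t j))
    (hQn : Q n = lam (n - 1))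
    (hQ : ∀ j, 2 ≤ j → j ≤ n - 1 → Q j = lam (j - 1) + ((s - t j) / d j) * Q (j + 1))
    (hB : ∀ j, 1 ≤ j → j ≤ n - 1 →
      Bminus j < 0 ∧ 0 < Bplus j ∧ Bminus j ≤ lam j ∧ lam j ≤ Bplus j) :
    min ui ui1 ≤ ui + (ui1 - ui) * (s + (s * (s - 1) / d 1) * Q 2) ∧
      ui + (ui1 - ui) * (s + (s * (s - 1) / d 1) * Q 2) ≤ max ui ui1 := by
  have hQ_mem : ∀ j, 1 ≤ j → j ≤ n - 1 → Q (j + 1) ∈ Icc (Bminus j) (Bplus j) := by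
    intro j hj1 hj
    induction hj using Nat.decreasingInduction with
    | self =>
      obtain ⟨-, -, hlo, hhi⟩ := hB (n - 1) hj1 le_rfl
      rw [Nat.sub_add_cancel (by omega), hQn]
      exact ⟨hlo, hhi⟩
    | of_succ j hj ih =>
      obtain ⟨hBm, hBp, -, -⟩ := hB (j + 1) (by omega) hj
      rw [hQ (j + 1) (by omega) hj, Nat.add_sub_cancel]
      refine add_mul_mem_Icc_of_bounds_recursion ⟨hs0, hs1⟩ (hd _ (by omega) hj)
        (ht _ (by omega) hj) (by simpa using hBrec_le (j + 1) (by omega) hj)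
        (by simpa using hBrec_gt (j + 1) (by omega) hj) hBm.le hBp.le (ih (by omega))
  have hQ2 : Q 2 ∈ Icc (-d 1) (d 1) := by
    simpa [hBm1, hBp1] using hQ_mem 1 le_rfl (by omega)
  exact add_sub_mul_mem_uIcc
    (add_mul_div_mul_mem_Icc_zero_one ⟨hs0, hs1⟩ (hd 1 le_rfl (by omega)) hQ2)
end

section
/- Let n ≥ 2 be an integer, s ∈ [0,1] a real number, and u_i, u_{i+1}, u_min, u_max real numbers with u_i ≠ u_{i+1}, u_min ≤ min(u_i, u_{i+1}), and u_max ≥ max(u_i, u_{i+1}). If u_{i+1} > u_i, set m_ℓ = min(0, (u_min − u_i)/(u_{i+1} − u_i)) and m_r = max(1, (u_max − u_i)/(u_{i+1} − u_i)); if u_{i+1} < u_i, set m_ℓ = min(0, (u_max − u_i)/(u_{i+1} − u_i)) and m_r = max(1, (u_min − u_i)/(u_{i+1} − u_i)). Let d_1, …, d_{n−1} be positive reals, let t_2, …, t_{n−1} be reals each satisfying t_j ≤ 0 or t_j > 1, and let λ̄_1, …, λ̄_{n−1} be reals. Define B_1⁻ = (−4(m_r − 1) − 1)·d_1, B_1⁺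 = (−4·m_ℓ + 1)·d_1, and for 2 ≤ j ≤ n−1: if t_j ≤ 0 then B_j⁻ = (B_{j−1}⁻ − λ̄_{j−1})·d_j/(1−t_j) and B_j⁺ = (B_{j−1}⁺ − λ̄_{j−1})·d_j/(1−t_j); if t_j > 1 then B_j⁻ = (B_{j−1}⁺ − λ̄_{j−1})·d_j/(−t_j) and B_j⁺ = (B_{j−1}⁻ − λ̄_{j−1})·d_j/(−t_j). Define Q_n = λ̄_{n−1} and, for j = n−1 down to 2, Q_j = λ̄_{j−1} + ((s − t_j)/d_j)·Q_{j+1}, and set U = u_i + (u_{i+1} − u_i)·(s + (s(s−1)/d_1)·Q_2). If B_j⁻ < 0, B_j⁺ > 0, and B_j⁻ ≤ λ̄_j ≤ B_j⁺ for every 1 ≤ j ≤ n−1, then u_min ≤ U ≤ u_max. -/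
/-!
Write `S = s + s(s-1)/d₁ · Q₂`, so that `U = uᵢ + (uᵢ₊₁ - uᵢ)·S`. Each Horner step
`Q_j = λ̄_{j-1} + (s - t_j)/d_j · Q_{j+1}` multiplies `Q_{j+1}` by a factor of fixed sign whose
modulus is at most `(1 - t_j)/d_j` (if `t_j ≤ 0`) or `t_j/d_j` (if `t_j > 1`); since the bounds
`B_j^∓` straddle `0`, scaling by a smaller factor keeps `Q_{j+1}` inside the scaled bounds, and the
recursion for `B_j^±` is exactly the statement that these scaled bounds, shifted by `λ̄_{j-1}`, are
`B_{j-1}^±`. Downward induction gives `B₁⁻ ≤ Q₂ ≤ B₁⁺`, and `0 ≤ s(1-s) ≤ 1/4` turns this into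
`m_ℓ ≤ S ≤ m_r`, which is `u_min ≤ U ≤ u_max` after undoing the normalisation.
-/

open Set

lemma mul_mem_Icc_mul_of_mem_Icc {c C a b q : ℝ} (hc : c ∈ Icc 0 C) (hq : q ∈ Icc a b)
    (ha : a ≤ 0) (hb : 0 ≤ b) : c * q ∈ Icc (C * a) (C * b) := by
  obtain ⟨hc0, hcC⟩ := hc
  obtain ⟨haq, hqb⟩ := hq
  constructor
  · nlinarith [mul_le_mul_of_nonneg_left haq hc0]
  · nlinarith [mul_le_mul_of_nonneg_left hqb hc0]

lemma eq_add_div_mul_of_eq_mul_div {b b' l c d : ℝ} (hc : c ≠ 0) (hd : d ≠ 0)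
    (h : b' = (b - l) * d / c) : b = l + c / d * b' := by
  rw [h]
  field_simp
  ring

section HornerStep

variable {s t d l q bm bp : ℝ}

lemma horner_step_mem_Icc_of_nonpos (hs : s ∈ Icc 0 1) (ht : t ≤ 0) (hd : 0 < d)
    (hq : q ∈ Icc bm bp) (hbm : bm ≤ 0) (hbp : 0 ≤ bp) :
    l + (s - t) / d * q ∈ Icc (l + (1 - t) / d * bm) (l + (1 - t) / d * bp) := by
  have hc : (s - t) / d ∈ Icc 0 ((1 - t) / d) :=
    ⟨div_nonneg (by linarith [hs.1]) hd.le, div_le_div_of_nonneg_right (by linarith [hs.2]) hd.le⟩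
  obtain ⟨h₁, h₂⟩ := mul_mem_Icc_mul_of_mem_Icc hc hq hbm hbp
  exact ⟨by linarith, by linarith⟩

lemma horner_step_mem_Icc_of_one_lt (hs : s ∈ Icc 0 1) (ht : 1 < t) (hd : 0 < d)
    (hq : q ∈ Icc bm bp) (hbm : bm ≤ 0) (hbp : 0 ≤ bp) :
    l + (s - t) / d * q ∈ Icc (l + -t / d * bp) (l + -t / d * bm) := by
  have hc : (t - s) / d ∈ Icc 0 (t / d) :=
    ⟨div_nonneg (by linarith [hs.2]) hd.le, div_le_div_of_nonneg_right (by linarith [hs.1]) hd.le⟩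
  obtain ⟨h₁, h₂⟩ := mul_mem_Icc_mul_of_mem_Icc hc hq hbm hbp
  have hflip : (s - t) / d = -((t - s) / d) := by ring
  rw [hflip, neg_div]
  exact ⟨by linarith, by linarith⟩

end HornerStep

theorem horner_mem_Icc_relaxed_bounds (n : ℕ) (s : ℝ) (hs : s ∈ Icc 0 1)
    (d t lam Bminus Bplus Q : ℕ → ℝ)
    (hd : ∀ j, 1 ≤ j → j ≤ n - 1 → 0 < d j)
    (ht : ∀ j, 2 ≤ j → j ≤ n - 1 → t j ≤ 0 ∨ 1 < t j)
    (hBrec_le : ∀ j, 2 ≤ j → j ≤ n - 1 → t j ≤ 0 →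
      Bminus j = (Bminus (j - 1) - lam (j - 1)) * d j / (1 - t j) ∧
      Bplus j = (Bplus (j - 1) - lam (j - 1)) * d j / (1 - t j))
    (hBrec_gt : ∀ j, 2 ≤ j → j ≤ n - 1 → 1 < t j →
      Bminus j = (Bplus (j - 1) - lam (j - 1)) * d j / (-t j) ∧
      Bplus j = (Bminus (j - 1) - lam (j - 1)) * d j / (-t j))
    (hQn : Q n = lam (n - 1))
    (hQ : ∀ j, 2 ≤ j → j ≤ n - 1 → Q j = lam (j - 1) + ((s - t j) / d j) * Q (j + 1))
    (hB : ∀ j, 1 ≤ j → j ≤ n - 1 →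
      Bminus j < 0 ∧ 0 < Bplus j ∧ Bminus j ≤ lam j ∧ lam j ≤ Bplus j)
    {j : ℕ} (hj2 : 2 ≤ j) (hjn : j ≤ n) : Q j ∈ Icc (Bminus (j - 1)) (Bplus (j - 1)) := by
  refine Nat.decreasingInduction' (P := fun k => Q k ∈ Icc (Bminus (k - 1)) (Bplus (k - 1)))
    (fun k hkn hjk ih => ?_) hjn ?_
  · have hk2 : 2 ≤ k := hj2.trans hjk
    have hkn' : k ≤ n - 1 := by omega
    obtain ⟨hbm, hbp, -, -⟩ := hB k (by omega) hkn'
    have hdk := hd k (by omega) hkn'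
    rw [Nat.add_sub_cancel] at ih
    rw [hQ k hk2 hkn']
    rcases ht k hk2 hkn' with htk | htk
    · obtain ⟨em, ep⟩ := hBrec_le k hk2 hkn' htk
      rw [eq_add_div_mul_of_eq_mul_div (by linarith) hdk.ne' em,
        eq_add_div_mul_of_eq_mul_div (by linarith) hdk.ne' ep]
      exact horner_step_mem_Icc_of_nonpos hs htk hdk ih hbm.le hbp.le
    · obtain ⟨em, ep⟩ := hBrec_gt k hk2 hkn' htk
      rw [eq_add_div_mul_of_eq_mul_div (by linarith) hdk.ne' ep,
        eq_add_div_mul_of_eq_mul_div (by linarith) hdk.ne' em]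
      exact horner_step_mem_Icc_of_one_lt hs htk hdk ih hbm.le hbp.le
  · obtain ⟨-, -, hlo, hhi⟩ := hB (n - 1) (by omega) le_rfl
    exact hQn ▸ ⟨hlo, hhi⟩

lemma add_quadratic_mul_mem_Icc {s d q ml mr : ℝ} (hs : s ∈ Icc 0 1) (hd : 0 < d)
    (hml : ml ≤ 0) (hmr : 1 ≤ mr) (hq : q ∈ Icc ((-4 * (mr - 1) - 1) * d) ((-4 * ml + 1) * d)) :
    s + s * (s - 1) / d * q ∈ Icc ml mr := by
  obtain ⟨hs0, hs1⟩ := hs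
  have hw : 0 ≤ s * (1 - s) / d := div_nonneg (mul_nonneg hs0 (by linarith)) hd.le
  have hlo := mul_le_mul_of_nonneg_left hq.1 hw
  have hhi := mul_le_mul_of_nonneg_left hq.2 hw
  have hcancel : ∀ x, s * (1 - s) / d * (x * d) = s * (1 - s) * x := fun x => by
    field_simp
  rw [hcancel] at hlo hhi
  have hflip : s * (s - 1) / d * q = -(s * (1 - s) / d * q) := by ring
  rw [hflip]
  -- `4 s (1 - s) ≤ 1`, i.e. `(1 - 2s)² ≥ 0`
  constructor
  · nlinarith [sq_nonneg s, mul_nonneg (neg_nonneg.2 hml) (sq_nonneg (1 - 2 * s))]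
  · nlinarith [sq_nonneg (1 - s), mul_nonneg (sub_nonneg.2 hmr) (sq_nonneg (1 - 2 * s))]

lemma add_sub_mul_mem_Icc_of_lt {a b lo hi S : ℝ} (hab : a < b) (hlo : lo ≤ a) (hhi : b ≤ hi)
    (hS : S ∈ Icc (min 0 ((lo - a) / (b - a))) (max 1 ((hi - a) / (b - a)))) :
    a + (b - a) * S ∈ Icc lo hi := by
  have hba : 0 < b - a := sub_pos.2 hab
  rw [min_eq_right (div_nonpos_of_nonpos_of_nonneg (by linarith) hba.le),
    max_eq_right ((le_div_iff₀ hba).2 (by linarith))] at hS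
  obtain ⟨h₁, h₂⟩ := hS
  rw [div_le_iff₀ hba] at h₁
  rw [le_div_iff₀ hba] at h₂
  exact ⟨by linarith, by linarith⟩

lemma add_sub_mul_mem_Icc_of_gt {a b lo hi S : ℝ} (hab : b < a) (hlo : lo ≤ b) (hhi : a ≤ hi)
    (hS : S ∈ Icc (min 0 ((hi - a) / (b - a))) (max 1 ((lo - a) / (b - a)))) :
    a + (b - a) * S ∈ Icc lo hi := by
  have hneg : -a + (-b - -a) * S ∈ Icc (-hi) (-lo) := by
    refine add_sub_mul_mem_Icc_of_lt (neg_lt_neg hab) (neg_le_neg hhi) (neg_le_neg hlo) ?_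
    rwa [show (-hi - -a) / (-b - -a) = (hi - a) / (b - a) by rw [← neg_div_neg_eq]; ring_nf,
      show (-lo - -a) / (-b - -a) = (lo - a) / (b - a) by rw [← neg_div_neg_eq]; ring_nf]
  obtain ⟨h₁, h₂⟩ := hneg
  exact ⟨by linarith, by linarith⟩

/-- Constrained-positivity consequence of the main PPI theorem: the degree-n Newton
interpolant U = u_i + (u_{i+1} − u_i)·S_n obeys the user-supplied constraints
u_min ≤ U ≤ u_max. -/
theorem ppi_constrained (n : ℕ) (hn : 2 ≤ n) (s : ℝ) (hs0 : 0 ≤ s) (hs1 : s ≤ 1)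
    (ui ui1 umin umax ml mr : ℝ)
    (hne : ui ≠ ui1) (hmin : umin ≤ min ui ui1) (hmax : max ui ui1 ≤ umax)
    (hml_gt : ui < ui1 → ml = min 0 ((umin - ui) / (ui1 - ui)))
    (hmr_gt : ui < ui1 → mr = max 1 ((umax - ui) / (ui1 - ui)))
    (hml_lt : ui1 < ui → ml = min 0 ((umax - ui) / (ui1 - ui)))
    (hmr_lt : ui1 < ui → mr = max 1 ((umin - ui) / (ui1 - ui)))
    (d t lam Bminus Bplus Q : ℕ → ℝ)
    (hd : ∀ j, 1 ≤ j → j ≤ n - 1 → 0 < d j)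
    (ht : ∀ j, 2 ≤ j → j ≤ n - 1 → t j ≤ 0 ∨ 1 < t j)
    (hBm1 : Bminus 1 = (-4 * (mr - 1) - 1) * d 1)
    (hBp1 : Bplus 1 = (-4 * ml + 1) * d 1)
    (hBrec_le : ∀ j, 2 ≤ j → j ≤ n - 1 → t j ≤ 0 →
      Bminus j = (Bminus (j - 1) - lam (j - 1)) * d j / (1 - t j) ∧
      Bplus j = (Bplus (j - 1) - lam (j - 1)) * d j / (1 - t j))
    (hBrec_gt : ∀ j, 2 ≤ j → j ≤ n - 1 → 1 < t j →
      Bminus j = (Bplus (j - 1) - lam (j - 1)) * d j / (-t j) ∧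
      Bplus j = (Bminus (j - 1) - lam (j - 1)) * d j / (-t j))
    (hQn : Q n = lam (n - 1))
    (hQ : ∀ j, 2 ≤ j → j ≤ n - 1 → Q j = lam (j - 1) + ((s - t j) / d j) * Q (j + 1))
    (hB : ∀ j, 1 ≤ j → j ≤ n - 1 →
      Bminus j < 0 ∧ 0 < Bplus j ∧ Bminus j ≤ lam j ∧ lam j ≤ Bplus j) :
    umin ≤ ui + (ui1 - ui) * (s + (s * (s - 1) / d 1) * Q 2) ∧
      ui + (ui1 - ui) * (s + (s * (s - 1) / d 1) * Q 2) ≤ umax := by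
  have hs : s ∈ Icc 0 1 := ⟨hs0, hs1⟩
  have hQ2 : Q 2 ∈ Icc (Bminus 1) (Bplus 1) := horner_mem_Icc_relaxed_bounds n s hs d t lam
    Bminus Bplus Q hd ht hBrec_le hBrec_gt hQn hQ hB le_rfl hn
  rw [hBm1, hBp1] at hQ2
  rcases hne.lt_or_gt with h | h
  · have hS := add_quadratic_mul_mem_Icc hs (hd 1 le_rfl (by omega))
      (hml_gt h ▸ min_le_left _ _) (hmr_gt h ▸ le_max_left _ _) hQ2
    rw [hml_gt h, hmr_gt h] at hS
    exact add_sub_mul_mem_Icc_of_lt h (hmin.trans (min_le_left _ _))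
      ((le_max_right _ _).trans hmax) hS
  · have hS := add_quadratic_mul_mem_Icc hs (hd 1 le_rfl (by omega))
      (hml_lt h ▸ min_le_left _ _) (hmr_lt h ▸ le_max_left _ _) hQ2
    rw [hml_lt h, hmr_lt h] at hS
    exact add_sub_mul_mem_Icc_of_gt h (hmin.trans (min_le_right _ _))
      ((le_max_left _ _).trans hmax) hS
end
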